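/- Perturbation bound (spectral norm): Let A be a rank-r matrix with column span 𝒜, let B be any matrix of the same size, and let B_r be a best rank-r approximation of B (via SVD) with column span ℬ_r. If ‖B − A‖ < σ_r(A), where σ_r(A) is the smallest nonzero singular value of A, then ‖P_{𝒜⊥} P_{ℬ_r}‖ ≤ ‖P_{𝒜⊥} B‖ / (σ_r(A) − ‖B − A‖) ≤ ‖B − A‖ / (σ_r(A) − ‖B − A‖). -/

import Mathlib

open Matrix

/-- Spectral (operator) norm of a real matrix. -/
noncomputable def spec {n m : ℕ} (M : Matrix (Fin n) (Fin m) ℝ) : ℝ :=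
  ‖LinearMap.toContinuousLinearMap (Matrix.toEuclideanLin M)‖

/-- Column span of a matrix, as a subspace of Euclidean space. -/
noncomputable def colSpan {n m : ℕ} (M : Matrix (Fin n) (Fin m) ℝ) :
    Submodule ℝ (EuclideanSpace ℝ (Fin n)) :=
  LinearMap.range (Matrix.toEuclideanLin M)

/-- The matrix of the orthogonal projection onto a subspace of ℝⁿ. -/
noncomputable def projMat {n : ℕ} (K : Submodule ℝ (EuclideanSpace ℝ (Fin n))) :
    Matrix (Fin n) (Fin n) ℝ :=
  Matrix.toEuclideanLin.symm ((K.subtypeL.comp K.orthogonalProjectionOnto).toLinearMap)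

open Finset

lemma spec_nonneg {n m : ℕ} (M : Matrix (Fin n) (Fin m) ℝ) : 0 ≤ spec M := norm_nonneg _

lemma spec_apply_le {n m : ℕ} (M : Matrix (Fin n) (Fin m) ℝ) (x : EuclideanSpace ℝ (Fin m)) :
    ‖Matrix.toEuclideanLin M x‖ ≤ spec M * ‖x‖ :=
  (LinearMap.toContinuousLinearMap (Matrix.toEuclideanLin M)).le_opNorm x

lemma spec_le_bound {n m : ℕ} (M : Matrix (Fin n) (Fin m) ℝ) {c : ℝ} (hc : 0 ≤ c)
    (h : ∀ x : EuclideanSpace ℝ (Fin m), ‖Matrix.toEuclideanLin M x‖ ≤ c * ‖x‖) :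
    spec M ≤ c :=
  ContinuousLinearMap.opNorm_le_bound _ hc h

lemma toEuclideanLin_apply' {n m : ℕ} (M : Matrix (Fin n) (Fin m) ℝ)
    (x : EuclideanSpace ℝ (Fin m)) (i : Fin n) :
    Matrix.toEuclideanLin M x i = M.mulVec x i := rfl

lemma toEuclideanLin_mul {n k m : ℕ} (M : Matrix (Fin n) (Fin k) ℝ) (N : Matrix (Fin k) (Fin m) ℝ)
    (x : EuclideanSpace ℝ (Fin m)) :
    Matrix.toEuclideanLin (M * N) x = Matrix.toEuclideanLin M (Matrix.toEuclideanLin N x) := by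
  ext i
  simp only [toEuclideanLin_apply']
  rw [show (Matrix.toEuclideanLin N x : Fin k → ℝ) = N.mulVec x from rfl, ← Matrix.mulVec_mulVec]

/-- extension of coords to ℕ -/
noncomputable def ext' {k : ℕ} (x : EuclideanSpace ℝ (Fin k)) : ℕ → ℝ :=
  fun i => if h : i < k then x ⟨i, h⟩ else 0

lemma normsq_eq {k : ℕ} (x : EuclideanSpace ℝ (Fin k)) :
    ‖x‖ ^ 2 = ∑ i ∈ range k, (ext' x i) ^ 2 := by
  rw [← real_inner_self_eq_norm_sq, PiLp.inner_apply,
    ← Fin.sum_univ_eq_sum_range (fun i => (ext' x i)^2) k]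
  exact Finset.sum_congr rfl (fun i _ => by simp [ext', RCLike.inner_apply, sq])

lemma diag_mulVec {n m : ℕ} (d : ℕ → ℝ) (w : EuclideanSpace ℝ (Fin m)) (i : ℕ) (hi : i < n) :
    ext' (Matrix.toEuclideanLin (Matrix.of (fun (i : Fin n) (j : Fin m) =>
      if (i : ℕ) = (j : ℕ) then d i else 0)) w) i = d i * ext' w i := by
  simp only [ext', dif_pos hi, toEuclideanLin_apply']
  unfold Matrix.mulVec dotProduct
  by_cases h : i < m
  · rw [Finset.sum_eq_single (⟨i, h⟩ : Fin m)]
    · simp [ext', h]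
    · intro b _ hb
      have : ¬ ((⟨i, hi⟩ : Fin n) : ℕ) = (b : ℕ) := by
        simp only [Fin.val_mk]
        intro hc; apply hb; exact Fin.ext hc.symm
      simp [this]
    · simp
  · rw [Finset.sum_eq_zero, eq_comm]
    · simp [ext', h]
    · intro b _
      have : ¬ ((⟨i, hi⟩ : Fin n) : ℕ) = (b : ℕ) := by
        simp only [Fin.val_mk]; omega
      simp [this]

lemma orth_norm {k : ℕ} (U : Matrix (Fin k) (Fin k) ℝ) (hU : Uᵀ * U = 1)
    (x : EuclideanSpace ℝ (Fin k)) : ‖Matrix.toEuclideanLin U x‖ = ‖x‖ := by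
  have h2 : ‖Matrix.toEuclideanLin U x‖ ^ 2 = ‖x‖ ^ 2 := by
    rw [← real_inner_self_eq_norm_sq, ← real_inner_self_eq_norm_sq]
    simp only [PiLp.inner_apply, RCLike.inner_apply, starRingEnd_apply, star_trivial]
    have : ∀ i, Matrix.toEuclideanLin U x i = U.mulVec x i := fun _ => rfl
    simp only [this]
    have : (U.mulVec x) ⬝ᵥ (U.mulVec x) = x ⬝ᵥ x := by
      rw [Matrix.dotProduct_mulVec, ← Matrix.mulVec_transpose, Matrix.mulVec_mulVec, hU,
        Matrix.one_mulVec]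
    simpa [dotProduct] using this
  nlinarith [norm_nonneg (Matrix.toEuclideanLin U x), norm_nonneg x]

lemma projMat_apply {n : ℕ} (K : Submodule ℝ (EuclideanSpace ℝ (Fin n)))
    (x : EuclideanSpace ℝ (Fin n)) :
    Matrix.toEuclideanLin (projMat K) x = (K.orthogonalProjectionOnto x : EuclideanSpace ℝ (Fin n)) := by
  unfold projMat
  rw [LinearEquiv.apply_symm_apply]
  rfl

lemma norm_projMat_apply_le {n : ℕ} (K : Submodule ℝ (EuclideanSpace ℝ (Fin n)))
    (x : EuclideanSpace ℝ (Fin n)) :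
    ‖Matrix.toEuclideanLin (projMat K) x‖ ≤ ‖x‖ := by
  rw [projMat_apply]
  exact K.orthogonalProjectionOnto.le_opNorm x |>.trans
    (by nlinarith [Submodule.orthogonalProjectionOnto_norm_le K, norm_nonneg x,
      K.orthogonalProjectionOnto.opNorm_nonneg])

lemma projMat_mul_colSpan_eq_zero {n m : ℕ} (A : Matrix (Fin n) (Fin m) ℝ) :
    projMat (colSpan A)ᗮ * A = 0 := by
  apply Matrix.toEuclideanLin.injective
  apply LinearMap.ext
  intro x
  rw [toEuclideanLin_mul, projMat_apply]
  have hmem : Matrix.toEuclideanLin A x ∈ ((colSpan A)ᗮ)ᗮ :=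
    (Submodule.le_orthogonal_orthogonal (colSpan A)) (LinearMap.mem_range_self _ x)
  rw [Submodule.orthogonalProjectionOnto_apply_of_mem_orthogonal hmem]
  simp

lemma sq_le_of_norm {a b : ℝ} (ha : 0 ≤ a) (hb : 0 ≤ b) (h : a ^ 2 ≤ b ^ 2) : a ≤ b := by
  nlinarith

noncomputable abbrev diagM (n m : ℕ) (d : ℕ → ℝ) : Matrix (Fin n) (Fin m) ℝ :=
  Matrix.of (fun (i : Fin n) (j : Fin m) => if (i : ℕ) = (j : ℕ) then d i else 0)

lemma diag_normsq {n m : ℕ} (d : ℕ → ℝ) (w : EuclideanSpace ℝ (Fin m)) :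
    ‖Matrix.toEuclideanLin (diagM n m d) w‖ ^ 2 = ∑ i ∈ Finset.range n, (d i * ext' w i) ^ 2 := by
  rw [normsq_eq]
  exact Finset.sum_congr rfl (fun i hi => by
    rw [diag_mulVec d w i (Finset.mem_range.mp hi)])

lemma diag_lower {n m r : ℕ} (hrn : r ≤ n) (d : ℕ → ℝ) (σ : ℝ) (hσ : 0 ≤ σ)
    (hd : ∀ i, i < r → σ ≤ d i) (w : EuclideanSpace ℝ (Fin m))
    (hw : ∀ i, r ≤ i → ext' w i = 0) :
    σ * ‖w‖ ≤ ‖Matrix.toEuclideanLin (diagM n m d) w‖ := by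
  apply sq_le_of_norm (by positivity) (norm_nonneg _)
  rw [mul_pow, normsq_eq, diag_normsq]
  have h2 : ∑ i ∈ Finset.range n, (d i * ext' w i) ^ 2
      = ∑ i ∈ Finset.range r, (d i * ext' w i) ^ 2 := by
    refine (Finset.sum_subset (Finset.range_subset_range.mpr hrn) (fun i _ hi => ?_)).symm
    have : ext' w i = 0 := hw i (le_of_not_gt (fun hc => hi (Finset.mem_range.mpr hc)))
    simp [this]
  have hm : ∑ i ∈ Finset.range m, (ext' w i) ^ 2 = ∑ i ∈ Finset.range r, (ext' w i) ^ 2 := by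
    rcases le_total r m with hrm | hmr
    · refine (Finset.sum_subset (Finset.range_subset_range.mpr hrm) (fun i _ hi => ?_)).symm
      have : ext' w i = 0 := hw i (le_of_not_gt (fun hc => hi (Finset.mem_range.mpr hc)))
      simp [this]
    · refine Finset.sum_subset (Finset.range_subset_range.mpr hmr) (fun i hi hi2 => ?_)
      have : ext' w i = 0 := by
        simp only [ext']
        rw [dif_neg]
        exact fun hc => hi2 (Finset.mem_range.mpr hc)
      simp [this]
  rw [h2, hm, Finset.mul_sum]
  apply Finset.sum_le_sum
  intro i hi
  have hir := Finset.mem_range.mp hi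
  have h1 := hd i hir
  have hdd : σ ^ 2 ≤ d i ^ 2 := by nlinarith
  nlinarith [sq_nonneg (ext' w i)]

lemma diag_upper {n m : ℕ} (d : ℕ → ℝ) (σ : ℝ) (hσ : 0 ≤ σ)
    (w : EuclideanSpace ℝ (Fin m))
    (h : ∀ i, i < n → (d i * ext' w i) ^ 2 ≤ σ ^ 2 * (ext' w i) ^ 2) :
    ‖Matrix.toEuclideanLin (diagM n m d) w‖ ≤ σ * ‖w‖ := by
  apply sq_le_of_norm (norm_nonneg _) (by positivity)
  rw [mul_pow, diag_normsq, normsq_eq]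
  calc ∑ i ∈ Finset.range n, (d i * ext' w i) ^ 2
      ≤ ∑ i ∈ Finset.range n, σ ^ 2 * (ext' w i) ^ 2 :=
        Finset.sum_le_sum (fun i hi => h i (Finset.mem_range.mp hi))
    _ = ∑ i ∈ Finset.range (min n m), σ ^ 2 * (ext' w i) ^ 2 := by
        refine (Finset.sum_subset (Finset.range_subset_range.mpr (min_le_left n m))
          (fun i hi hi2 => ?_)).symm
        have hmin : ¬ i < min n m := fun hc => hi2 (Finset.mem_range.mpr hc)
        have hin := Finset.mem_range.mp hi
        have him : m ≤ i := by omega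
        have : ext' w i = 0 := by
          simp only [ext']; rw [dif_neg]; omega
        simp [this]
    _ ≤ ∑ i ∈ Finset.range m, σ ^ 2 * (ext' w i) ^ 2 :=
        Finset.sum_le_sum_of_subset_of_nonneg (Finset.range_subset_range.mpr (min_le_right n m))
          (fun i _ _ => by positivity)
    _ = σ ^ 2 * ∑ i ∈ Finset.range m, (ext' w i) ^ 2 := (Finset.mul_sum _ _ _).symm

section coordSub
variable {k : ℕ} (P : Fin k → Prop) [DecidablePred P]

/-- extend-by-zero linear map from coordinates in `P`. -/
noncomputable def restr :
    EuclideanSpace ℝ {i : Fin k // P i} →ₗ[ℝ] EuclideanSpace ℝ (Fin k) where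
  toFun w := WithLp.toLp 2 (fun i => if h : P i then w ⟨i, h⟩ else 0)
  map_add' u v := by ext i; by_cases h : P i <;> simp [h]
  map_smul' c u := by ext i; by_cases h : P i <;> simp [h]

noncomputable def coordSub : Submodule ℝ (EuclideanSpace ℝ (Fin k)) :=
  LinearMap.range (restr P)

lemma restr_injective : Function.Injective (restr P) := by
  intro u v h
  ext i
  have := congrFun (congrArg WithLp.ofLp h) i.1
  simpa [restr, i.2] using this

lemma mem_coordSub_iff (x : EuclideanSpace ℝ (Fin k)) :
    x ∈ coordSub P ↔ ∀ i : Fin k, ¬ P i → x i = 0 := by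
  constructor
  · rintro ⟨w, rfl⟩ i hi
    show (if h : P i then w ⟨i, h⟩ else 0) = 0
    simp [hi]
  · intro h
    refine ⟨WithLp.toLp 2 (fun i => x i.1), ?_⟩
    ext i
    show (if h : P i then x i else 0) = x i
    by_cases hp : P i
    · simp [hp]
    · simp [hp, (h i hp).symm]

lemma finrank_coordSub :
    Module.finrank ℝ (coordSub P) = Fintype.card {i : Fin k // P i} := by
  rw [coordSub, LinearMap.finrank_range_of_inj (restr_injective P)]
  simp [finrank_euclideanSpace]

lemma card_lt {r : ℕ} (hrk : r ≤ k) : Fintype.card {i : Fin k // (i : ℕ) < r} = r := by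
  rw [Fintype.card_congr (⟨fun i => (⟨i.1.1, i.2⟩ : Fin r),
    fun j => ⟨⟨j.1, lt_of_lt_of_le j.2 hrk⟩, j.2⟩,
    fun i => by ext; rfl, fun j => by ext; rfl⟩ :
      {i : Fin k // (i : ℕ) < r} ≃ Fin r)]
  exact Fintype.card_fin r

lemma card_ge {c : ℕ} (hck : c ≤ k) : Fintype.card {i : Fin k // c ≤ (i : ℕ)} = k - c := by
  rw [Fintype.card_congr (⟨fun i => (⟨i.1.1 - c, by omega⟩ : Fin (k - c)),
    fun j => ⟨⟨j.1 + c, by have := j.2; omega⟩, by show c ≤ j.1 + c; omega⟩,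
    fun i => Subtype.ext (Fin.ext (by show (i.1.1 - c) + c = i.1.1; have := i.2; omega)),
    fun j => Fin.ext (by show (j.1 + c) - c = j.1; omega)⟩ :
      {i : Fin k // c ≤ (i : ℕ)} ≃ Fin (k - c))]
  exact Fintype.card_fin _

end coordSub

lemma finrank_map_eq_of_inj {k l : ℕ} (f : EuclideanSpace ℝ (Fin k) →ₗ[ℝ] EuclideanSpace ℝ (Fin l))
    (hf : Function.Injective f) (K : Submodule ℝ (EuclideanSpace ℝ (Fin k))) :
    Module.finrank ℝ (K.map f) = Module.finrank ℝ K := by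
  have h1 : K.map f = LinearMap.range (f ∘ₗ K.subtype) := by
    rw [LinearMap.range_comp, Submodule.range_subtype]
  rw [h1, LinearMap.finrank_range_of_inj
    (by rw [LinearMap.coe_comp]; exact hf.comp K.injective_subtype)]

lemma toEuclideanLin_one {k : ℕ} (x : EuclideanSpace ℝ (Fin k)) :
    Matrix.toEuclideanLin (1 : Matrix (Fin k) (Fin k) ℝ) x = x := by
  ext i
  rw [toEuclideanLin_apply', Matrix.one_mulVec]

lemma orth_cancel {k : ℕ} (V : Matrix (Fin k) (Fin k) ℝ) (hV : Vᵀ * V = 1)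
    (w : EuclideanSpace ℝ (Fin k)) :
    Matrix.toEuclideanLin Vᵀ (Matrix.toEuclideanLin V w) = w := by
  rw [← toEuclideanLin_mul, hV, toEuclideanLin_one]

lemma orth_inj {k : ℕ} (U : Matrix (Fin k) (Fin k) ℝ) (hU : Uᵀ * U = 1) :
    Function.Injective (Matrix.toEuclideanLin U) := by
  intro x y h
  have h0 : ‖x - y‖ = 0 := by
    rw [← orth_norm U hU, map_sub, h, sub_self, norm_zero]
  exact sub_eq_zero.mp (norm_eq_zero.mp h0)

lemma weyl_step {n m r : ℕ} (hr : 0 < r) (hrn : r ≤ n) (hrm : r ≤ m)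
    (A B : Matrix (Fin n) (Fin m) ℝ)
    (UA : Matrix (Fin n) (Fin n) ℝ) (VA : Matrix (Fin m) (Fin m) ℝ) (t : ℕ → ℝ)
    (hUA : UAᵀ * UA = 1) (hVA : VAᵀ * VA = 1)
    (ht_mono : ∀ i j : ℕ, i ≤ j → t j ≤ t i) (ht_nonneg : ∀ i, 0 ≤ t i)
    (hA : A = UA * Matrix.of (fun (i : Fin n) (j : Fin m) =>
      if (i : ℕ) = (j : ℕ) then t i else 0) * VAᵀ)
    (U : Matrix (Fin n) (Fin n) ℝ) (V : Matrix (Fin m) (Fin m) ℝ) (s : ℕ → ℝ)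
    (hU : Uᵀ * U = 1) (hV : Vᵀ * V = 1)
    (hs_mono : ∀ i j : ℕ, i ≤ j → s j ≤ s i) (hs_nonneg : ∀ i, 0 ≤ s i)
    (hB : B = U * Matrix.of (fun (i : Fin n) (j : Fin m) =>
      if (i : ℕ) = (j : ℕ) then s i else 0) * Vᵀ) :
    t (r - 1) ≤ s (r - 1) + spec (B - A) := by
  classical
  set K1 := coordSub (fun j : Fin m => (j : ℕ) < r) with hK1
  set K2 := coordSub (fun j : Fin m => r - 1 ≤ (j : ℕ)) with hK2
  set S := K1.map (Matrix.toEuclideanLin VA) with hS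
  set W := K2.map (Matrix.toEuclideanLin V) with hW
  have hdimS : Module.finrank ℝ S = r := by
    rw [hS, finrank_map_eq_of_inj _ (orth_inj VA hVA), hK1, finrank_coordSub, card_lt hrm]
  have hdimW : Module.finrank ℝ W = m - (r - 1) := by
    rw [hW, finrank_map_eq_of_inj _ (orth_inj V hV), hK2, finrank_coordSub,
      card_ge (by omega : r - 1 ≤ m)]
  have hsup : Module.finrank ℝ (S ⊔ W : Submodule ℝ (EuclideanSpace ℝ (Fin m))) ≤ m := by
    have := Submodule.finrank_le (S ⊔ W : Submodule ℝ (EuclideanSpace ℝ (Fin m)))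
    simpa [finrank_euclideanSpace] using this
  have hinf : 0 < Module.finrank ℝ (S ⊓ W : Submodule ℝ (EuclideanSpace ℝ (Fin m))) := by
    have heq := Submodule.finrank_sup_add_finrank_inf_eq S W
    rw [hdimS, hdimW] at heq
    omega
  have hne : (S ⊓ W : Submodule ℝ (EuclideanSpace ℝ (Fin m))) ≠ ⊥ := by
    intro hbot
    rw [hbot, finrank_bot] at hinf
    omega
  obtain ⟨x, hx, hx0⟩ := Submodule.exists_mem_ne_zero_of_ne_bot hne
  obtain ⟨hxS, hxW⟩ := Submodule.mem_inf.mp hx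
  obtain ⟨w1, hw1K, hw1⟩ := hxS
  obtain ⟨w2, hw2K, hw2⟩ := hxW
  have hw1supp : ∀ i, r ≤ i → ext' w1 i = 0 := by
    intro i hi
    simp only [ext']
    split
    · next h =>
      exact (mem_coordSub_iff _ w1).mp hw1K ⟨i, h⟩ (by simp; omega)
    · rfl
  have hnormx1 : ‖w1‖ = ‖x‖ := by rw [← hw1, orth_norm VA hVA]
  have hnormx2 : ‖w2‖ = ‖x‖ := by rw [← hw2, orth_norm V hV]
  -- lower bound for ‖A x‖
  have hAx : Matrix.toEuclideanLin A x =
      Matrix.toEuclideanLin UA (Matrix.toEuclideanLin (diagM n m t) w1) := by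
    rw [hA, toEuclideanLin_mul, toEuclideanLin_mul, ← hw1, orth_cancel VA hVA]
  have hlow : t (r - 1) * ‖x‖ ≤ ‖Matrix.toEuclideanLin A x‖ := by
    rw [hAx, orth_norm UA hUA, ← hnormx1]
    exact diag_lower hrn t (t (r - 1)) (ht_nonneg _)
      (fun i hi => ht_mono i (r - 1) (by omega)) w1 hw1supp
  -- upper bound for ‖B x‖
  have hBx : Matrix.toEuclideanLin B x =
      Matrix.toEuclideanLin U (Matrix.toEuclideanLin (diagM n m s) w2) := by
    rw [hB, toEuclideanLin_mul, toEuclideanLin_mul, ← hw2, orth_cancel V hV]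
  have hup : ‖Matrix.toEuclideanLin B x‖ ≤ s (r - 1) * ‖x‖ := by
    rw [hBx, orth_norm U hU, ← hnormx2]
    apply diag_upper s (s (r - 1)) (hs_nonneg _) w2
    intro i hi
    by_cases hz : ext' w2 i = 0
    · simp [hz]
    · have him : i < m := by
        by_contra hc
        exact hz (by simp [ext', hc])
      have hge : r - 1 ≤ i := by
        by_contra hc
        exact hz (by
          simp only [ext', dif_pos him]
          exact (mem_coordSub_iff _ w2).mp hw2K ⟨i, him⟩ (by simpa using hc))
      have h1 : s i ≤ s (r - 1) := hs_mono (r - 1) i hge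
      have h2 : 0 ≤ s i := hs_nonneg i
      have h3 : s i * s i ≤ s (r - 1) * s (r - 1) :=
        mul_le_mul h1 h1 h2 (le_trans h2 h1)
      nlinarith [sq_nonneg (ext' w2 i)]
  -- combine
  have htri : ‖Matrix.toEuclideanLin A x‖ ≤ ‖Matrix.toEuclideanLin B x‖
      + ‖Matrix.toEuclideanLin (B - A) x‖ := by
    have : Matrix.toEuclideanLin A x = Matrix.toEuclideanLin B x
        - Matrix.toEuclideanLin (B - A) x := by
      rw [map_sub]
      simp
    rw [this]
    exact norm_sub_le _ _
  have hspec := spec_apply_le (B - A) x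
  have hxpos : 0 < ‖x‖ := norm_pos_iff.mpr hx0
  have : t (r - 1) * ‖x‖ ≤ (s (r - 1) + spec (B - A)) * ‖x‖ := by
    calc t (r - 1) * ‖x‖ ≤ ‖Matrix.toEuclideanLin A x‖ := hlow
      _ ≤ ‖Matrix.toEuclideanLin B x‖ + ‖Matrix.toEuclideanLin (B - A) x‖ := htri
      _ ≤ s (r - 1) * ‖x‖ + spec (B - A) * ‖x‖ := add_le_add hup hspec
      _ = (s (r - 1) + spec (B - A)) * ‖x‖ := by ring
  exact le_of_mul_le_mul_right this hxpos

lemma key_preimage {n m r : ℕ} (hr : 0 < r) (hrn : r ≤ n) (hrm : r ≤ m)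
    (B : Matrix (Fin n) (Fin m) ℝ)
    (U : Matrix (Fin n) (Fin n) ℝ) (V : Matrix (Fin m) (Fin m) ℝ) (s : ℕ → ℝ)
    (hU : Uᵀ * U = 1) (hV : Vᵀ * V = 1)
    (hs_mono : ∀ i j : ℕ, i ≤ j → s j ≤ s i) (hs_nonneg : ∀ i, 0 ≤ s i)
    (hB : B = U * Matrix.of (fun (i : Fin n) (j : Fin m) =>
      if (i : ℕ) = (j : ℕ) then s i else 0) * Vᵀ)
    (Br : Matrix (Fin n) (Fin m) ℝ)
    (hBr : Br = U * Matrix.of (fun (i : Fin n) (j : Fin m) =>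
      if (i : ℕ) = (j : ℕ) ∧ (i : ℕ) < r then s i else 0) * Vᵀ)
    (hσ : 0 < s (r - 1))
    (y : EuclideanSpace ℝ (Fin n)) (hy : y ∈ colSpan Br) :
    ∃ z : EuclideanSpace ℝ (Fin m), Matrix.toEuclideanLin B z = y ∧
      s (r - 1) * ‖z‖ ≤ ‖y‖ := by
  classical
  set σ := s (r - 1) with hσdef
  have hsle : ∀ i, i < r → σ ≤ s i := fun i hi => hs_mono i (r - 1) (by omega)
  -- rewrite Br as a diagonal sandwich
  set dtr : ℕ → ℝ := fun i => if i < r then s i else 0 with hdtr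
  have hBr' : Br = U * diagM n m dtr * Vᵀ := by
    rw [hBr]
    congr 1
    congr 1
    apply Matrix.ext
    intro i j
    show (if (i : ℕ) = (j : ℕ) ∧ (i : ℕ) < r then s i else 0)
      = (if (i : ℕ) = (j : ℕ) then dtr i else 0)
    by_cases h1 : (i : ℕ) = (j : ℕ) <;> by_cases h2 : (i : ℕ) < r <;> simp [h1, h2, hdtr]
  obtain ⟨u, hu⟩ := hy
  set w : EuclideanSpace ℝ (Fin n) :=
    Matrix.toEuclideanLin (diagM n m dtr) (Matrix.toEuclideanLin Vᵀ u) with hw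
  have hyw : y = Matrix.toEuclideanLin U w := by
    rw [← hu, hBr', toEuclideanLin_mul, toEuclideanLin_mul]
  have hwsupp : ∀ i, r ≤ i → ext' w i = 0 := by
    intro i hi
    by_cases hin : i < n
    · rw [hw, diag_mulVec dtr _ i hin]
      have : dtr i = 0 := by simp [hdtr]; omega
      simp [this]
    · simp [ext', hin]
  -- define the preimage coordinates
  set w' : EuclideanSpace ℝ (Fin m) :=
    WithLp.toLp 2 (fun j : Fin m => if (j : ℕ) < r then ext' w (j : ℕ) / s (j : ℕ) else 0) with hw'
  have hw'ext : ∀ i, ext' w' i = if i < r then ext' w i / s i else 0 := by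
    intro i
    by_cases him : i < m
    · simp only [ext', dif_pos him, hw']
    · have hir : ¬ i < r := by omega
      simp [ext', him, hir]
  set z : EuclideanSpace ℝ (Fin m) := Matrix.toEuclideanLin V w' with hz
  refine ⟨z, ?_, ?_⟩
  · -- B z = y
    rw [hB, toEuclideanLin_mul, toEuclideanLin_mul, hz, orth_cancel V hV, hyw]
    congr 1
    ext i
    have hin : (i : ℕ) < n := i.2
    have h1 : Matrix.toEuclideanLin (diagM n m s) w' i = ext' (Matrix.toEuclideanLin (diagM n m s) w') (i : ℕ) := by
      simp [ext', hin]
    have h2 : w i = ext' w (i : ℕ) := by simp [ext', hin]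
    rw [show (Matrix.toEuclideanLin (diagM n m s) w' i : ℝ) = ext' (Matrix.toEuclideanLin (diagM n m s) w') (i : ℕ) from h1,
      diag_mulVec s w' (i : ℕ) hin, hw'ext]
    by_cases hir : (i : ℕ) < r
    · rw [if_pos hir, h2]
      have hsne : s (i : ℕ) ≠ 0 := ne_of_gt (lt_of_lt_of_le hσ (hsle _ hir))
      field_simp
    · rw [if_neg hir, h2, hwsupp (i : ℕ) (by omega), mul_zero]
  · -- norm bound
    rw [hz, orth_norm V hV, hyw, orth_norm U hU]
    apply sq_le_of_norm (by positivity) (norm_nonneg _)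
    rw [mul_pow, normsq_eq, normsq_eq]
    calc σ ^ 2 * ∑ i ∈ Finset.range m, (ext' w' i) ^ 2
        = ∑ i ∈ Finset.range m, σ ^ 2 * (ext' w' i) ^ 2 := Finset.mul_sum _ _ _
      _ ≤ ∑ i ∈ Finset.range m, (ext' w i) ^ 2 := by
          apply Finset.sum_le_sum
          intro i _
          rw [hw'ext]
          by_cases hir : i < r
          · rw [if_pos hir]
            have h1 := hsle i hir
            have h2 : 0 < s i := lt_of_lt_of_le hσ h1
            have h3 : σ ^ 2 ≤ s i ^ 2 := by nlinarith
            rw [div_pow]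
            calc σ ^ 2 * ((ext' w i) ^ 2 / (s i) ^ 2)
                ≤ s i ^ 2 * ((ext' w i) ^ 2 / (s i) ^ 2) :=
                  mul_le_mul_of_nonneg_right h3 (by positivity)
              _ = (ext' w i) ^ 2 := by field_simp
          · rw [if_neg hir]
            simp [sq_nonneg (ext' w i)]
      _ = ∑ i ∈ Finset.range (min m n), (ext' w i) ^ 2 := by
          refine (Finset.sum_subset (Finset.range_subset_range.mpr (min_le_left m n))
            (fun i hi hi2 => ?_)).symm
          have h1 : ¬ i < min m n := fun hc => hi2 (Finset.mem_range.mpr hc)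
          have h2 := Finset.mem_range.mp hi
          have : ext' w i = 0 := by simp [ext']; omega
          simp [this]
      _ ≤ ∑ i ∈ Finset.range n, (ext' w i) ^ 2 :=
          Finset.sum_le_sum_of_subset_of_nonneg (Finset.range_subset_range.mpr (min_le_right m n))
            (fun i _ _ => sq_nonneg _)


/-- Perturbation bound (spectral norm).  `A` is a rank-r matrix given via its
SVD `A = UA·ΣA·VAᵀ` (singular values `t`, nonincreasing and nonnegative, exactly
the first `r` of which are nonzero, so `σ_r(A) = t (r−1)` is the smallest
nonzero singular value of `A`).  `B` is given via its SVD `B = U·Σ·Vᵀ`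
(singular values `s`), and `Br = U·Σ_r·Vᵀ` is the rank-r truncation of `B`.
If `‖B − A‖ < σ_r(A)` then
`‖P_{𝒜⊥} P_{ℬ_r}‖ ≤ ‖P_{𝒜⊥} B‖/(σ_r(A) − ‖B − A‖) ≤ ‖B − A‖/(σ_r(A) − ‖B − A‖)`. -/
theorem perturbation_bound_spectral {n m r : ℕ} (hr : 0 < r) (hrn : r ≤ n) (hrm : r ≤ m)
    (A B : Matrix (Fin n) (Fin m) ℝ)
    -- SVD of A with rank exactly r
    (UA : Matrix (Fin n) (Fin n) ℝ) (VA : Matrix (Fin m) (Fin m) ℝ) (t : ℕ → ℝ)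
    (hUA : UAᵀ * UA = 1) (hVA : VAᵀ * VA = 1)
    (ht_mono : ∀ i j : ℕ, i ≤ j → t j ≤ t i) (ht_nonneg : ∀ i, 0 ≤ t i)
    (ht_rank : ∀ k : ℕ, k < min n m → (0 < t k ↔ k < r))
    (hA : A = UA * Matrix.of (fun (i : Fin n) (j : Fin m) =>
      if (i : ℕ) = (j : ℕ) then t i else 0) * VAᵀ)
    -- SVD of B
    (U : Matrix (Fin n) (Fin n) ℝ) (V : Matrix (Fin m) (Fin m) ℝ) (s : ℕ → ℝ)
    (hU : Uᵀ * U = 1) (hV : Vᵀ * V = 1)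
    (hs_mono : ∀ i j : ℕ, i ≤ j → s j ≤ s i) (hs_nonneg : ∀ i, 0 ≤ s i)
    (hB : B = U * Matrix.of (fun (i : Fin n) (j : Fin m) =>
      if (i : ℕ) = (j : ℕ) then s i else 0) * Vᵀ)
    -- the rank-r truncation of B
    (Br : Matrix (Fin n) (Fin m) ℝ)
    (hBr : Br = U * Matrix.of (fun (i : Fin n) (j : Fin m) =>
      if (i : ℕ) = (j : ℕ) ∧ (i : ℕ) < r then s i else 0) * Vᵀ)
    -- the perturbation is smaller than the smallest nonzero singular value of A
    (hgap : spec (B - A) < t (r - 1)) :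
    spec (projMat (colSpan A)ᗮ * projMat (colSpan Br))
        ≤ spec (projMat (colSpan A)ᗮ * B) / (t (r - 1) - spec (B - A)) ∧
      spec (projMat (colSpan A)ᗮ * B) / (t (r - 1) - spec (B - A))
        ≤ spec (B - A) / (t (r - 1) - spec (B - A)) := by
  have hweyl := weyl_step hr hrn hrm A B UA VA t hUA hVA ht_mono ht_nonneg hA
    U V s hU hV hs_mono hs_nonneg hB
  have hden : 0 < t (r - 1) - spec (B - A) := sub_pos.mpr hgap
  have hσ : 0 < s (r - 1) := by linarith
  set P := projMat (colSpan A)ᗮ with hP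
  have hPA : P * A = 0 := projMat_mul_colSpan_eq_zero A
  have hPBeq : P * B = P * (B - A) := by rw [Matrix.mul_sub, hPA, sub_zero]
  have hPBle : spec (P * B) ≤ spec (B - A) := by
    rw [hPBeq]
    apply spec_le_bound _ (spec_nonneg _)
    intro x
    rw [toEuclideanLin_mul]
    calc ‖Matrix.toEuclideanLin P (Matrix.toEuclideanLin (B - A) x)‖
        ≤ ‖Matrix.toEuclideanLin (B - A) x‖ := norm_projMat_apply_le _ _
      _ ≤ spec (B - A) * ‖x‖ := spec_apply_le _ _
  have hPBnn := spec_nonneg (P * B)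
  have hfirst : spec (P * projMat (colSpan Br)) ≤ spec (P * B) / s (r - 1) := by
    apply spec_le_bound _ (by positivity)
    intro x
    rw [toEuclideanLin_mul]
    have hy : Matrix.toEuclideanLin (projMat (colSpan Br)) x
        = (((colSpan Br).orthogonalProjectionOnto x : EuclideanSpace ℝ (Fin n))) :=
      projMat_apply _ _
    have hymem : Matrix.toEuclideanLin (projMat (colSpan Br)) x ∈ colSpan Br := by
      rw [hy]; exact SetLike.coe_mem _
    have hyx : ‖Matrix.toEuclideanLin (projMat (colSpan Br)) x‖ ≤ ‖x‖ :=
      norm_projMat_apply_le _ _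
    obtain ⟨z, hz1, hz2⟩ := key_preimage hr hrn hrm B U V s hU hV hs_mono hs_nonneg hB
      Br hBr hσ _ hymem
    calc ‖Matrix.toEuclideanLin P (Matrix.toEuclideanLin (projMat (colSpan Br)) x)‖
        = ‖Matrix.toEuclideanLin (P * B) z‖ := by rw [toEuclideanLin_mul, hz1]
      _ ≤ spec (P * B) * ‖z‖ := spec_apply_le _ _
      _ ≤ spec (P * B) * (‖Matrix.toEuclideanLin (projMat (colSpan Br)) x‖ / s (r - 1)) := by
          apply mul_le_mul_of_nonneg_left _ hPBnn
          rw [le_div_iff₀ hσ]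
          linarith [hz2]
      _ ≤ spec (P * B) * (‖x‖ / s (r - 1)) := by gcongr
      _ = spec (P * B) / s (r - 1) * ‖x‖ := by ring
  constructor
  · calc spec (P * projMat (colSpan Br)) ≤ spec (P * B) / s (r - 1) := hfirst
      _ ≤ spec (P * B) / (t (r - 1) - spec (B - A)) := by
          gcongr
          linarith
  · gcongr
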